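/- Let p be C^k near 0, k ≥ 3, with p' having a zero of order exactly k-1 at 0 (i.e., p'(0)=...=p^{(k-1)}(0)=0, p^{(k)}(0) ≠ 0). Then lim_{φ→0} p'(φ)(p'(φ) + p'''(φ))/(p'(φ)² + p''(φ)²) = (k-2)/(k-1). -/

import Mathlib

/-!
Write `d = p⁽ᵏ⁾(0)`. By L'Hôpital's rule and induction on the order of vanishing,
`p'(φ) / φ^(k-1) → d / (k-1)!`, `p''(φ) / φ^(k-2) → d / (k-2)!` and
`p'''(φ) / φ^(k-3) → d / (k-3)!`. After dividing numerator and denominator by `φ^(2k-4)`,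
the `p'²` terms carry an extra factor `φ²` and vanish in the limit, so the quotient tends to
`(d / (k-1)!) (d / (k-3)!) / (d / (k-2)!)² = (k-2) / (k-1)`.
-/

open Filter Topology

section

variable {𝕜 : Type*} [NontriviallyNormedField 𝕜] {F : Type*} [NormedAddCommGroup F]
  [NormedSpace 𝕜 F]

theorem ContDiffAt.eventually_differentiableAt {E : Type*} [NormedAddCommGroup E]
    [NormedSpace 𝕜 E] {f : E → F} {a : E} {n : ℕ} (hf : ContDiffAt 𝕜 (n + 1) f a) :
    ∀ᶠ x in 𝓝 a, DifferentiableAt 𝕜 f x :=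
  (hf.eventually (by simp)).mono fun _ hx => hx.differentiableAt (by simp)

theorem ContDiffAt.iterate_deriv {f : 𝕜 → F} {a : 𝕜} {m : ℕ} :
    ∀ j : ℕ, ContDiffAt 𝕜 (j + m : ℕ) f a → ContDiffAt 𝕜 m (deriv^[j] f) a
  | 0, hf => by simpa using hf
  | j + 1, hf => ContDiffAt.iterate_deriv j (f := deriv f) <|
      hf.derivWithin (by push_cast; rw [add_right_comm])

end

theorem tendsto_div_pow_of_iteratedDeriv_eq_zero {a : ℝ} :
    ∀ (m : ℕ) {f : ℝ → ℝ}, ContDiffAt ℝ m f a → (∀ j < m, iteratedDeriv j f a = 0) →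
      Tendsto (fun x => f x / (x - a) ^ m) (𝓝[≠] a) (𝓝 (iteratedDeriv m f a / (m.factorial : ℝ)))
  | 0, f, hf, _ => by
      simpa using hf.continuousAt.tendsto.mono_left nhdsWithin_le_nhds
  | m + 1, f, hf, hz => by
      have hfa : f a = 0 := by simpa using hz 0 m.succ_pos
      have hf' : ContDiffAt ℝ m (deriv f) a := hf.derivWithin le_rfl
      have ih := tendsto_div_pow_of_iteratedDeriv_eq_zero m hf' fun j hj => by
        simpa only [← iteratedDeriv_succ'] using hz (j + 1) (by omega)
      rw [← iteratedDeriv_succ'] at ih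
      have hg : ∀ x, deriv (fun x => (x - a) ^ (m + 1)) x = (m + 1) * (x - a) ^ m := fun x => by
        simp
      have tendsto_zero : ∀ {g : ℝ → ℝ}, ContinuousAt g a → g a = 0 → Tendsto g (𝓝[≠] a) (𝓝 0) :=
        fun hg hga => hga ▸ hg.tendsto.mono_left nhdsWithin_le_nhds
      refine deriv.lhopital_zero_nhdsNE (g := fun x => (x - a) ^ (m + 1))
        (hf.eventually_differentiableAt.filter_mono nhdsWithin_le_nhds) ?_
        (tendsto_zero hf.continuousAt hfa) (tendsto_zero (by fun_prop) (by simp)) ?_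
      · filter_upwards [self_mem_nhdsWithin] with x hx
        rw [hg]
        exact mul_ne_zero (by positivity) (pow_ne_zero _ (sub_ne_zero.mpr hx))
      · convert ih.div_const ((m : ℝ) + 1) using 1
        · ext x
          rw [hg, div_div, mul_comm]
        · rw [div_div, Nat.factorial_succ, Nat.cast_mul, Nat.cast_succ, mul_comm]

theorem tendsto_iterate_deriv_div_pow {f : ℝ → ℝ} {a : ℝ} {n j : ℕ} (hf : ContDiffAt ℝ n f a)
    (hjn : j ≤ n) (hz : ∀ i, j ≤ i → i < n → iteratedDeriv i f a = 0) :
    Tendsto (fun x => deriv^[j] f x / (x - a) ^ (n - j)) (𝓝[≠] a)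
      (𝓝 (iteratedDeriv n f a / ((n - j).factorial : ℝ))) := by
  have hshift : ∀ i, iteratedDeriv i (deriv^[j] f) = iteratedDeriv (i + j) f := fun i => by
    simp only [iteratedDeriv_eq_iterate, Function.iterate_add_apply]
  have h := tendsto_div_pow_of_iteratedDeriv_eq_zero (n - j)
    (ContDiffAt.iterate_deriv j (by rwa [Nat.add_sub_cancel' hjn])) fun i hi => by
      rw [hshift]; exact hz _ (by omega) (by omega)
  rwa [hshift, Nat.sub_add_cancel hjn] at h

theorem tendsto_mul_add_div_sq_add_sq {A B C : ℝ → ℝ} {a b c : ℝ} (n : ℕ)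
    (hA : Tendsto (fun x => A x / x ^ (n + 2)) (𝓝[≠] 0) (𝓝 a))
    (hB : Tendsto (fun x => B x / x ^ (n + 1)) (𝓝[≠] 0) (𝓝 b))
    (hC : Tendsto (fun x => C x / x ^ n) (𝓝[≠] 0) (𝓝 c)) (hb : b ≠ 0) :
    Tendsto (fun x => A x * (A x + C x) / (A x ^ 2 + B x ^ 2)) (𝓝[≠] 0) (𝓝 (a * c / b ^ 2)) := by
  have hx : Tendsto (fun x : ℝ => x) (𝓝[≠] 0) (𝓝 0) := nhdsWithin_le_nhds
  have h := ((hA.mul hA).mul (hx.pow 2) |>.add (hA.mul hC)).div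
    ((hA.mul hA).mul (hx.pow 2) |>.add (hB.mul hB)) (by simpa using hb)
  rw [show a * c / b ^ 2 = (a * a * 0 ^ 2 + a * c) / (a * a * 0 ^ 2 + b * b) by ring]
  refine h.congr' ?_
  filter_upwards [self_mem_nhdsWithin] with x (hx : x ≠ 0)
  rw [Pi.div_apply, ← div_div_div_cancel_right₀ (pow_ne_zero (2 * n + 2) hx) (A x * (A x + C x))]
  congr 1 <;> field_simp <;> ring

theorem div_factorial_mul_div_factorial_div_sq {d : ℝ} (hd : d ≠ 0) (m : ℕ) :
    d / ((m + 2).factorial : ℝ) * (d / (m.factorial : ℝ)) / (d / ((m + 1).factorial : ℝ)) ^ 2 =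
      (m + 1) / (m + 2) := by
  simp only [Nat.factorial_succ, Nat.cast_mul]
  field_simp
  push_cast
  ring

theorem limit_winding_integrand
    (p : ℝ → ℝ) (k : ℕ) (hk : 3 ≤ k) (hp : ContDiffAt ℝ k p 0)
    (hzero : ∀ j, 1 ≤ j → j ≤ k - 1 → iteratedDeriv j p 0 = 0)
    (hne : iteratedDeriv k p 0 ≠ 0) :
    Filter.Tendsto
      (fun φ => deriv p φ * (deriv p φ + deriv (deriv (deriv p)) φ)
          / ((deriv p φ) ^ 2 + (deriv (deriv p) φ) ^ 2))
      (nhdsWithin 0 {(0:ℝ)}ᶜ) (nhds (((k : ℝ) - 2) / ((k : ℝ) - 1))) := by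
  obtain ⟨m, rfl⟩ : ∃ m, k = m + 3 := ⟨k - 3, by omega⟩
  have hz : ∀ j, 1 ≤ j → ∀ i, j ≤ i → i < m + 3 → iteratedDeriv i p 0 = 0 :=
    fun j hj i hi hik => hzero i (by omega) (by omega)
  have hA := tendsto_iterate_deriv_div_pow hp (j := 1) (by omega) (hz 1 le_rfl)
  have hB := tendsto_iterate_deriv_div_pow hp (j := 2) (by omega) (hz 2 (by omega))
  have hC := tendsto_iterate_deriv_div_pow hp (j := 3) (by omega) (hz 3 (by omega))
  simp only [sub_zero, Nat.reduceSubDiff] at hA hB hC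
  have h := tendsto_mul_add_div_sq_add_sq m hA hB hC (div_ne_zero hne (by positivity))
  rw [div_factorial_mul_div_factorial_div_sq hne] at h
  rw [show ((m + 3 : ℕ) : ℝ) - 2 = m + 1 by push_cast; ring,
    show ((m + 3 : ℕ) : ℝ) - 1 = m + 2 by push_cast; ring]
  exact h
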